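/- arXiv:2603.29008 — 2 statements merged into one kernel-verified Lean document; each statement's English description precedes it below -/
import Mathlib

section
/- Let Γ be a finite simple graph and Λ ≤ Γ an induced subgraph. The commensurator of the subgroup ⟨Λ⟩ in the right-angled Artin group A(Γ) coincides with the normaliser of ⟨Λ⟩ in A(Γ), and both equal ⟨star(Λ)⟩, the subgroup generated by the vertices of the star of Λ. -/
/-! ## Right-angled Artin groups -/

/-- The commutator relations defining the right-angled Artin group of a graph. -/
def raagRels {V : Type*} (Γ : SimpleGraph V) : Set (FreeGroup V) :=
  {r | ∃ u v : V, Γ.Adj u v ∧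
    r = FreeGroup.of u * FreeGroup.of v * (FreeGroup.of u)⁻¹ * (FreeGroup.of v)⁻¹}

/-- The right-angled Artin group of a simple graph. -/
abbrev RAAG {V : Type*} (Γ : SimpleGraph V) : Type _ := PresentedGroup (raagRels Γ)

/-- The canonical generator of `RAAG Γ` associated to a vertex. -/
abbrev RAAG.gen {V : Type*} (Γ : SimpleGraph V) (v : V) : RAAG Γ :=
  PresentedGroup.of v

/-- The canonical generating set of a right-angled Artin group: its vertex generators. -/
def raagGens {V : Type*} (Γ : SimpleGraph V) : Set (RAAG Γ) :=
  Set.range (RAAG.gen Γ)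

/-- The subgroup of `RAAG Γ` generated by (the generators corresponding to) a set of
vertices. -/
def vertexSubgroup {V : Type*} (Γ : SimpleGraph V) (Λ : Set V) : Subgroup (RAAG Γ) :=
  Subgroup.closure (RAAG.gen Γ '' Λ)

/-! ## Free abelian groups ℤ^n (written multiplicatively) -/

/-- The free abelian group `ℤ^n` of rank `n`, written multiplicatively. -/
abbrev FreeAb (n : ℕ) : Type := Multiplicative (Fin n → ℤ)

/-! ## Word metric and coarse separation -/

section Coarse

variable {G : Type*} [Group G]

/-- `S` is a finite generating set of `G`. -/
def IsFinGenSet (S : Set G) : Prop := S.Finite ∧ Subgroup.closure S = ⊤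

/-- One step in the Cayley graph of `(G, S)`: multiply on the right by a generator or
the inverse of a generator. -/
def WordStep (S : Set G) (x y : G) : Prop := ∃ s : G, (s ∈ S ∨ s⁻¹ ∈ S) ∧ y = x * s

/-- The word distance between two elements of `G`, with respect to the (symmetrised)
generating set `S`, with value `⊤` if `y` is not reachable from `x`. -/
noncomputable def wordDist (S : Set G) (x y : G) : ℕ∞ :=
  sInf {n : ℕ∞ | ∃ l : List G, (∀ s ∈ l, s ∈ S ∨ s⁻¹ ∈ S) ∧ y = x * l.prod ∧ n = l.length}

/-- The word distance from a subset `A ⊆ G` to a point. -/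
noncomputable def setWordDist (S : Set G) (A : Set G) (x : G) : ℕ∞ :=
  ⨅ a ∈ A, wordDist S a x

/-- The (closed) `L`-neighbourhood of a subset `A ⊆ G` in the word metric of `S`. -/
def wordNbhd (S : Set G) (A : Set G) (L : ℕ) : Set G :=
  {x | setWordDist S A x ≤ (L : ℕ∞)}

/-- Two points are connected within the subset `K` of the Cayley graph of `(G, S)` if they
are joined by a path of the Cayley graph staying in `K`. -/
def ConnectedInCayley (S : Set G) (K : Set G) (x y : G) : Prop :=
  Relation.ReflTransGen (fun a b => a ∈ K ∧ b ∈ K ∧ WordStep S a b) x y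

/-- The connected component of `x` in `K ⊆ G` (for the Cayley graph of `(G,S)`) is *deep*
with respect to `A`: it contains points arbitrarily far away from `A`. -/
def DeepComponent (S : Set G) (A : Set G) (K : Set G) (x : G) : Prop :=
  ∀ D : ℕ, ∃ y : G, ConnectedInCayley S K x y ∧ (D : ℕ∞) < setWordDist S A y

/-- A subset `A ⊆ G` *coarsely separates* `G` (with respect to the word metric associated
to `S`): the complement of some neighbourhood of `A` has at least two deep connected
components. -/
def CoarselySeparates (S : Set G) (A : Set G) : Prop :=
  ∃ L : ℕ, ∃ x y : G, x ∈ (wordNbhd S A L)ᶜ ∧ y ∈ (wordNbhd S A L)ᶜ ∧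
    ¬ ConnectedInCayley S (wordNbhd S A L)ᶜ x y ∧
    DeepComponent S A (wordNbhd S A L)ᶜ x ∧ DeepComponent S A (wordNbhd S A L)ᶜ y

end Coarse

/-! ## Splittings of groups -/

/-- The amalgamated free product of two groups along two injections of a common
subgroup, built as a quotient of the free product `Monoid.Coprod`. -/
def AmalgamatedProduct {A B C : Type*} [Group A] [Group B] [Group C]
    (φ₁ : C →* A) (φ₂ : C →* B) : Type _ :=
  (Monoid.Coprod A B) ⧸ Subgroup.normalClosure
    (Set.range fun c => Monoid.Coprod.inl (φ₁ c) * (Monoid.Coprod.inr (φ₂ c))⁻¹)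

noncomputable instance {A B C : Type*} [Group A] [Group B] [Group C]
    (φ₁ : C →* A) (φ₂ : C →* B) : Group (AmalgamatedProduct φ₁ φ₂) := by
  unfold AmalgamatedProduct; infer_instance

/-- A non-trivial decomposition of `G` as an amalgamated free product `A *_C B`,
with edge group `C`. -/
structure AmalgamSplitting (G : Type u) [Group G] (C : Type v) [Group C] where
  A : Type u
  B : Type u
  [grpA : Group A]
  [grpB : Group B]
  φ₁ : C →* A
  φ₂ : C →* B
  inj₁ : Function.Injective φ₁
  inj₂ : Function.Injective φ₂
  notSurj₁ : ¬ Function.Surjective φ₁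
  notSurj₂ : ¬ Function.Surjective φ₂
  iso : G ≃* AmalgamatedProduct φ₁ φ₂

/-- A decomposition of `G` as an HNN extension with edge group (isomorphic to) `C`. -/
structure HNNSplitting (G : Type u) [Group G] (C : Type v) [Group C] where
  K : Type u
  [grpK : Group K]
  A : Subgroup K
  B : Subgroup K
  φ : A ≃* B
  isoC : C ≃* A
  iso : G ≃* HNNExtension K A B φ

/-- `G` splits (non-trivially) over a subgroup isomorphic to `C`: it decomposes
non-trivially as an amalgamated free product or as an HNN extension with edge group `C`. -/
def SplitsOver (G : Type u) [Group G] (C : Type v) [Group C] : Prop :=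
  Nonempty (AmalgamSplitting G C) ∨ Nonempty (HNNSplitting G C)

/-- `G` virtually splits over (a subgroup isomorphic to) `C`: some finite-index subgroup
of `G` splits over a subgroup isomorphic to `C`. -/
def VirtuallySplitsOver (G : Type u) [Group G] (C : Type v) [Group C] : Prop :=
  ∃ H : Subgroup G, H.FiniteIndex ∧ SplitsOver H C

/-! ## Graph-theoretic conditions -/

section Graph

variable {V : Type*}

/-- Removing the vertex set `s` from `Γ` disconnects the graph: the induced subgraph on
the complement of `s` is not preconnected. -/
def SeparatesGraph (Γ : SimpleGraph V) (s : Set V) : Prop :=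
  ¬ (Γ.induce {v : V | v ∉ s}).Preconnected

/-- `Γ` is a complete graph. -/
def IsCompleteGraph (Γ : SimpleGraph V) : Prop := ∀ u v : V, u ≠ v → Γ.Adj u v

/-- A *complete cut* of a graph: a complete subgraph (clique) whose removal disconnects
the graph. -/
def CompleteCut (Γ : SimpleGraph V) (s : Set V) : Prop :=
  Γ.IsClique s ∧ SeparatesGraph Γ s

/-- Condition (iv) of the main theorem: `Γ` is a complete graph with `n+1` vertices, or
contains a complete subgraph of size `n` having a subgraph that separates `Γ`. -/
def CliqueCutCondition (Γ : SimpleGraph V) [Fintype V] (n : ℕ) : Prop :=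
  (IsCompleteGraph Γ ∧ Fintype.card V = n + 1) ∨
  (∃ t : Finset V, Γ.IsNClique n t ∧ ∃ s : Set V, s ⊆ ↑t ∧ SeparatesGraph Γ s)

end Graph

/-! ## Links and stars -/

section LinkStar

variable {V : Type*}

/-- The link of a set of vertices: all vertices adjacent to every vertex of `Λ`. -/
def linkSet (Γ : SimpleGraph V) (Λ : Set V) : Set V := {v | ∀ u ∈ Λ, Γ.Adj v u}

/-- The star of a set of vertices: `Λ` together with its link. -/
def starSet (Γ : SimpleGraph V) (Λ : Set V) : Set V := Λ ∪ linkSet Γ Λ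

/-- The star of a vertex: the vertex together with its neighbours. -/
def starOfVertex (Γ : SimpleGraph V) (u : V) : Set V := {v | v = u ∨ Γ.Adj u v}

end LinkStar

/-! ## Coarse geometry of graphs -/

section CoarseGraph

variable {W : Type*}

/-- The `L`-neighbourhood of a set of vertices in a graph, for the graph metric. -/
def graphNbhd (X : SimpleGraph W) (A : Set W) (L : ℕ) : Set W :=
  {x | ∃ a ∈ A, X.dist a x ≤ L}

/-- Two vertices are connected within `K`: joined by a path of `X` staying in `K`. -/
def ConnectedWithin (X : SimpleGraph W) (K : Set W) (x y : W) : Prop :=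
  Relation.ReflTransGen (fun a b => a ∈ K ∧ b ∈ K ∧ X.Adj a b) x y

/-- `x` is at graph distance at least `D` from every point of `A`. -/
def FarFrom (X : SimpleGraph W) (A : Set W) (D : ℕ) (x : W) : Prop :=
  ∀ a ∈ A, D ≤ X.dist a x

/-- A subset `Y` of a graph is coarsely connected: for some `r ≥ 0`, any two points of `Y`
are joined by an `r`-chain inside `Y`. -/
def CoarselyConnectedIn (X : SimpleGraph W) (Y : Set W) : Prop :=
  ∃ r : ℕ, ∀ x ∈ Y, ∀ y ∈ Y,
    Relation.ReflTransGen (fun a b => a ∈ Y ∧ b ∈ Y ∧ X.dist a b ≤ r) x y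

/-- A subset `Y` of a graph `X` is coarsely separated by a family `Zs` of subsets:
for some `L ≥ 0` and every `D ≥ 0`, there is `Z ∈ Zs` such that `Y` minus the
`L`-neighbourhood of `Z` has at least two connected components containing points at
distance at least `D` from `Z`. -/
def CoarselySeparatedByFamily (X : SimpleGraph W) (Y : Set W) (Zs : Set (Set W)) : Prop :=
  ∃ L : ℕ, ∀ D : ℕ, ∃ Z ∈ Zs, ∃ x ∈ Y \ graphNbhd X Z L, ∃ y ∈ Y \ graphNbhd X Z L,
    ¬ ConnectedWithin X (Y \ graphNbhd X Z L) x y ∧ FarFrom X Z D x ∧ FarFrom X Z D y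

/-- `Z` coarsely separates `Y` from `W'` in the graph `X`: some neighbourhood of `Z`
separates all points of `Y` sufficiently far from `Z` from all points of `W'`
sufficiently far from `Z`. -/
def CoarselySeparatesFrom (X : SimpleGraph W) (Z Y W' : Set W) : Prop :=
  ∃ L D₀ : ℕ, ∀ y ∈ Y, ∀ w ∈ W', FarFrom X Z D₀ y → FarFrom X Z D₀ w →
    ¬ ConnectedWithin X (graphNbhd X Z L)ᶜ y w

/-!
`⟨star Λ⟩` normalises `⟨Λ⟩` (the link centralises it), and a normaliser lies in the
commensurator, so it suffices to put the commensurator inside `⟨star Λ⟩`. If `g` commensurates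
`⟨Λ⟩`, then for each `v ∈ Λ` some `g⁻¹ vⁿ g` (`n ≠ 0`) lies in `⟨Λ⟩`; the retraction `r` of
`A(Γ)` onto `⟨Λ⟩` fixes it, so `g r(g)⁻¹` centralises `vⁿ`. Such a centraliser lies in
`⟨star v⟩`: for `w ∉ star v`, `A(Γ)` is the amalgam `A(Γ - w) *_{A(link w)} A(star w)`, no
conjugate of `vⁿ` lies in the edge group (its exponent sum at `v` is `n`), and normal forms show
that anything commuting with such an element of a factor lies in that factor; induct on the
number of vertices. Hence `g r(g)⁻¹ ∈ ⋂ ⟨star v⟩ = ⟨⋂ star v⟩ ⊆ ⟨star Λ⟩`.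
-/

namespace Subgroup

variable {G : Type*} [Group G]

theorem normalizer_le_commensurator (H : Subgroup G) :
    normalizer (H : Set G) ≤ Commensurable.commensurator H := fun _ hg => by
  rw [Commensurable.commensurator_mem_iff, conjAct_pointwise_smul_eq_self hg]

theorem exists_pow_conj_mem_of_mem_commensurator {H : Subgroup G} {g x : G}
    (hg : g ∈ Commensurable.commensurator H) (hx : x ∈ H) :
    ∃ n ≠ 0, g⁻¹ * x ^ n * g ∈ H := by
  rw [Commensurable.commensurator_mem_iff] at hg
  obtain ⟨n, hn, -, hmem⟩ := exists_pow_mem_of_relIndex_ne_zero hg.1 hx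
  refine ⟨n, hn.ne', ?_⟩
  have := mem_pointwise_smul_iff_inv_smul_mem.1 hmem.1
  rwa [← ConjAct.toConjAct_inv, ConjAct.toConjAct_smul, inv_inv] at this

end Subgroup

namespace Monoid.PushoutI

variable {ι : Type*} {G : ι → Type*} [∀ i, Group (G i)] {H : Type*} [Group H]
  {φ : ∀ i, H →* G i} {l l₁ l₂ : List (Σ i, G i)}

variable (φ) in
def listProd (l : List (Σ i, G i)) : PushoutI φ :=
  (l.map fun p => of p.1 p.2).prod

@[simp] theorem listProd_nil : listProd φ [] = 1 := rfl

@[simp] theorem listProd_cons (p : Σ i, G i) (l : List (Σ i, G i)) :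
    listProd φ (p :: l) = of p.1 p.2 * listProd φ l :=
  List.prod_cons

@[simp] theorem listProd_append (l₁ l₂ : List (Σ i, G i)) :
    listProd φ (l₁ ++ l₂) = listProd φ l₁ * listProd φ l₂ := by
  simp [listProd]

theorem ofCoprodI_word_prod (w : CoprodI.Word G) :
    ofCoprodI (φ := φ) w.prod = listProd φ w.toList := by
  simp [CoprodI.Word.prod, listProd, map_list_prod, Function.comp_def]

variable (φ) in
def IsReducedList (l : List (Σ i, G i)) : Prop :=
  (∀ p ∈ l, p.2 ∉ (φ p.1).range) ∧ l.IsChain fun p q => p.1 ≠ q.1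

theorem IsReducedList.infix (hl : IsReducedList φ l) (h : l₁ <:+: l) : IsReducedList φ l₁ :=
  ⟨fun p hp => hl.1 p (h.subset hp), hl.2.infix h⟩

namespace IsReducedList

def toWord (hl : IsReducedList φ l) : CoprodI.Word G :=
  ⟨l, fun p hp h1 => hl.1 p hp (h1 ▸ one_mem _), hl.2⟩

theorem map_fst_eq (hφ : ∀ i, Function.Injective (φ i)) (hl₁ : IsReducedList φ l₁)
    (hl₂ : IsReducedList φ l₂) (h : listProd φ l₁ = listProd φ l₂) :
    l₁.map Sigma.fst = l₂.map Sigma.fst := by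
  obtain ⟨d⟩ := NormalWord.transversal_nonempty φ hφ
  obtain ⟨w₁, hw₁, hfst₁⟩ := Reduced.exists_normalWord_prod_eq d (w := hl₁.toWord) hl₁.1
  obtain ⟨w₂, hw₂, hfst₂⟩ := Reduced.exists_normalWord_prod_eq d (w := hl₂.toWord) hl₂.1
  have : w₁ = w₂ := NormalWord.prod_injective <| by
    rw [hw₁, hw₂, ofCoprodI_word_prod, ofCoprodI_word_prod]
    exact h
  rw [this, hfst₂] at hfst₁
  exact hfst₁.symm

theorem listProd_mul_of_ne_of_mul_listProd (hφ : ∀ i, Function.Injective (φ i))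
    (hl : IsReducedList φ l) (hne : l ≠ []) {i : ι} (hhead : ∀ p ∈ l.head?, p.1 ≠ i)
    (hlast : ∀ p ∈ l.getLast?, p.1 ≠ i) {a b : G i} (ha : a ∉ (φ i).range)
    (hb : b ∉ (φ i).range) :
    listProd φ l * of i a ≠ of i b * listProd φ l := by
  intro h
  have hla : IsReducedList φ (l ++ [⟨i, a⟩]) :=
    ⟨fun p hp => (List.mem_append.1 hp).elim (hl.1 p) fun hp => by
      rw [List.mem_singleton.1 hp]; exact ha,
      hl.2.append (List.isChain_singleton _) (by simpa using hlast)⟩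
  have hbl : IsReducedList φ (⟨i, b⟩ :: l) :=
    ⟨fun p hp => (List.mem_cons.1 hp).elim (fun hp => hp ▸ hb) (hl.1 p),
      hl.2.cons fun p hp => (hhead p hp).symm⟩
  -- two reduced words with the same product whose sequences of factors differ at the start
  have hfst := hla.map_fst_eq hφ hbl (by simpa using h)
  obtain ⟨p, t, rfl⟩ := List.exists_cons_of_ne_nil hne
  simp only [List.cons_append, List.map_cons, List.map_append, List.cons.injEq] at hfst
  exact hhead p rfl hfst.1

theorem eq_nil_of_listProd_mul_of_eq (hφ : ∀ i, Function.Injective (φ i))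
    (hl : IsReducedList φ l) {i : ι} (hlast : ∀ p ∈ l.getLast?, p.1 ≠ i) {a b : G i}
    (ha : a ∉ (φ i).range) (hb : ∀ c, c * b * c⁻¹ ∉ (φ i).range)
    (h : listProd φ l * of i a = of i b * listProd φ l) : l = [] := by
  rcases l with _ | ⟨⟨j, g⟩, t⟩
  · rfl
  by_cases hj : j = i
  · subst hj
    have ht : t ≠ [] := by rintro rfl; exact hlast _ rfl rfl
    refine absurd ?_ ((hl.infix (List.suffix_cons _ _).isInfix).listProd_mul_of_ne_of_mul_listProd
      hφ ht (fun p hp => ((List.isChain_cons.1 hl.2).1 p hp).symm)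
      (fun p hp => hlast p (by simp [List.getLast?_cons, Option.mem_def.1 hp])) ha
      (by simpa using hb g⁻¹))
    rw [listProd_cons] at h
    rw [map_mul, map_mul, map_inv]
    calc listProd φ t * of j a = (of j g)⁻¹ * (of j g * listProd φ t * of j a) := by group
      _ = _ := by rw [h]; group
  · exact absurd h (hl.listProd_mul_of_ne_of_mul_listProd hφ (List.cons_ne_nil _ _)
      (by simpa using hj) hlast ha (by simpa using hb 1))

theorem listProd_mem_range_of_mul_of_eq (hφ : ∀ i, Function.Injective (φ i))
    (hl : IsReducedList φ l) {i : ι} {a b : G i}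
    (ha : ∀ c, c * a * c⁻¹ ∉ (φ i).range) (hb : ∀ c, c * b * c⁻¹ ∉ (φ i).range)
    (h : listProd φ l * of i a = of i b * listProd φ l) : listProd φ l ∈ (of i).range := by
  rcases List.eq_nil_or_concat' l with rfl | ⟨t, ⟨j, g⟩, rfl⟩
  · exact one_mem _
  by_cases hj : j = i
  · subst hj
    have ht : t = [] := by
      refine (hl.infix (List.prefix_append _ _).isInfix).eq_nil_of_listProd_mul_of_eq hφ
        (fun p hp => (List.isChain_append.1 hl.2).2.2 p hp _ rfl) (by simpa using ha g) hb ?_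
      rw [listProd_append] at h
      rw [map_mul, map_mul, map_inv]
      calc listProd φ t * (of j g * of j a * (of j g)⁻¹)
          = listProd φ t * listProd φ [⟨j, g⟩] * of j a * (of j g)⁻¹ := by simp [mul_assoc]
        _ = _ := by rw [h]; simp [mul_assoc]
    subst ht
    exact ⟨g, by simp⟩
  · exact absurd (hl.eq_nil_of_listProd_mul_of_eq hφ (by simpa using hj) (by simpa using ha 1) hb h)
      (by simp)

end IsReducedList

theorem exists_eq_base_mul_listProd (hφ : ∀ i, Function.Injective (φ i)) (x : PushoutI φ) :
    ∃ h l, IsReducedList φ l ∧ x = base φ h * listProd φ l := by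
  classical
  obtain ⟨d⟩ := NormalWord.transversal_nonempty φ hφ
  set w : NormalWord d := x • NormalWord.empty
  refine ⟨w.head, w.toList, ⟨fun p hp hmem => w.ne_one p hp ?_, w.chain_ne⟩, ?_⟩
  · -- a letter of `w` lies in the transversal, which meets the base group only in `1`
    have h₁ := (d.compl p.1).equiv_snd_eq_self_of_mem_of_one_mem (one_mem _)
      (w.normalized p.1 p.2 hp)
    have h₂ := (d.compl p.1).equiv_snd_eq_one_of_mem_of_one_mem (d.one_mem p.1) hmem
    exact congrArg Subtype.val (h₁.symm.trans h₂)
  · calc x = w.prod := by simp [w, NormalWord.prod_smul]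
      _ = _ := by rw [NormalWord.prod, ofCoprodI_word_prod]

theorem mem_range_of_commute (hφ : ∀ i, Function.Injective (φ i)) {i : ι} {a : G i}
    (ha : ∀ c, c * a * c⁻¹ ∉ (φ i).range) {x : PushoutI φ} (hx : Commute x (of i a)) :
    x ∈ (of i).range := by
  obtain ⟨h, l, hl, rfl⟩ := exists_eq_base_mul_listProd hφ x
  rw [← of_apply_eq_base φ i] at hx ⊢
  set c := φ i h
  have hconj : listProd φ l * of i a = of i (c⁻¹ * a * c) * listProd φ l := by
    rw [map_mul, map_mul, map_inv]
    calc listProd φ l * of i a = (of i c)⁻¹ * (of i c * listProd φ l * of i a) := by group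
      _ = _ := by rw [hx.eq]; group
  exact mul_mem ⟨c, rfl⟩ (hl.listProd_mem_range_of_mul_of_eq hφ ha
    (fun c' => by simpa [mul_assoc] using ha (c' * c⁻¹)) hconj)

end Monoid.PushoutI

namespace RAAG

variable {V : Type*} {Γ : SimpleGraph V}

theorem gen_commute {u v : V} (h : Γ.Adj u v) : Commute (gen Γ u) (gen Γ v) := by
  rw [← commutatorElement_eq_one_iff_commute, commutatorElement_def]
  exact (QuotientGroup.eq_one_iff _).2 (Subgroup.subset_normalClosure ⟨u, v, h, rfl⟩)

def lift {G : Type*} [Group G] (f : V → G) (hf : ∀ u v, Γ.Adj u v → Commute (f u) (f v)) :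
    RAAG Γ →* G :=
  PresentedGroup.toGroup (f := f) <| by
    rintro _ ⟨u, v, huv, rfl⟩
    simpa [commutatorElement_def] using (commutatorElement_eq_one_iff_commute).2 (hf u v huv)

@[simp] theorem lift_gen {G : Type*} [Group G] (f : V → G)
    (hf : ∀ u v, Γ.Adj u v → Commute (f u) (f v)) (v : V) : lift f hf (gen Γ v) = f v :=
  PresentedGroup.toGroup.of _

theorem hom_ext {G : Type*} [Group G] {φ ψ : RAAG Γ →* G} (h : ∀ v, φ (gen Γ v) = ψ (gen Γ v)) :
    φ = ψ :=
  PresentedGroup.ext h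

theorem gen_mem_vertexSubgroup {S : Set V} {v : V} (hv : v ∈ S) : gen Γ v ∈ vertexSubgroup Γ S :=
  Subgroup.subset_closure ⟨v, hv, rfl⟩

theorem vertexSubgroup_mono {S T : Set V} (h : S ⊆ T) :
    vertexSubgroup Γ S ≤ vertexSubgroup Γ T :=
  Subgroup.closure_mono (Set.image_mono h)

theorem vertexSubgroup_univ : vertexSubgroup Γ Set.univ = ⊤ := by
  rw [vertexSubgroup, Set.image_univ]
  exact PresentedGroup.closure_range_of _

open Classical in
variable (Γ) in
noncomputable def exponentSum (v : V) : RAAG Γ →* Multiplicative ℤ :=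
  lift (fun u => if u = v then Multiplicative.ofAdd 1 else 1) fun _ _ _ => Commute.all _ _

theorem exponentSum_gen_pow (v : V) (n : ℕ) :
    exponentSum Γ v (gen Γ v ^ n) = Multiplicative.ofAdd (n : ℤ) := by
  simp [exponentSum, ← ofAdd_nsmul]

theorem vertexSubgroup_le_ker_exponentSum {S : Set V} {v : V} (hv : v ∉ S) :
    vertexSubgroup Γ S ≤ (exponentSum Γ v).ker := by
  refine (Subgroup.closure_le _).2 ?_
  rintro _ ⟨u, hu, rfl⟩
  simp [exponentSum, show u ≠ v by rintro rfl; exact hv hu]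

open Classical in
variable (Γ) in
noncomputable def retraction (S : Set V) : RAAG Γ →* RAAG Γ :=
  lift (fun u => if u ∈ S then gen Γ u else 1) fun u v huv => by
    by_cases hu : u ∈ S <;> by_cases hv : v ∈ S <;> simp [hu, hv, gen_commute huv]

open Classical in
@[simp] theorem retraction_gen (S : Set V) (v : V) :
    retraction Γ S (gen Γ v) = if v ∈ S then gen Γ v else 1 :=
  lift_gen _ _ v

theorem retraction_comp (S T : Set V) :
    (retraction Γ S).comp (retraction Γ T) = retraction Γ (S ∩ T) :=
  hom_ext fun v => by by_cases hS : v ∈ S <;> by_cases hT : v ∈ T <;> simp [hS, hT]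

theorem retraction_mem (S : Set V) (x : RAAG Γ) : retraction Γ S x ∈ vertexSubgroup Γ S := by
  have hx : x ∈ vertexSubgroup Γ Set.univ := vertexSubgroup_univ (Γ := Γ) ▸ Subgroup.mem_top x
  induction hx using Subgroup.closure_induction with
  | mem _ hy =>
    obtain ⟨v, -, rfl⟩ := hy
    rw [retraction_gen]
    split_ifs with hv
    exacts [gen_mem_vertexSubgroup hv, one_mem _]
  | one => simp
  | mul _ _ _ _ hx hy => simpa using mul_mem hx hy
  | inv _ _ hx => simpa using inv_mem hx

theorem retraction_eq_self {S : Set V} {x : RAAG Γ} (hx : x ∈ vertexSubgroup Γ S) :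
    retraction Γ S x = x := by
  suffices vertexSubgroup Γ S ≤ MonoidHom.eqLocus (retraction Γ S) (MonoidHom.id _) from this hx
  refine (Subgroup.closure_le _).2 ?_
  rintro _ ⟨v, hv, rfl⟩
  show retraction Γ S (gen Γ v) = gen Γ v
  simp [hv]

theorem vertexSubgroup_inter (S T : Set V) :
    vertexSubgroup Γ (S ∩ T) = vertexSubgroup Γ S ⊓ vertexSubgroup Γ T := by
  refine le_antisymm (le_inf (vertexSubgroup_mono Set.inter_subset_left)
    (vertexSubgroup_mono Set.inter_subset_right)) fun x ⟨hS, hT⟩ => ?_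
  rw [← retraction_eq_self hS, ← retraction_eq_self hT, ← MonoidHom.comp_apply,
    retraction_comp]
  exact retraction_mem _ _

theorem vertexSubgroup_biInter {ι : Type*} {s : Set ι} (hs : s.Finite) (f : ι → Set V) :
    vertexSubgroup Γ (⋂ i ∈ s, f i) = ⨅ i ∈ s, vertexSubgroup Γ (f i) := by
  induction s, hs using Set.Finite.induction_on with
  | empty => simp [vertexSubgroup_univ]
  | insert _ _ ih => rw [Set.biInter_insert, iInf_insert, vertexSubgroup_inter, ih]

section Splitting

open Monoid Monoid.PushoutI

variable (Γ) (A B : Set V)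

def splitFactor : Bool → Subgroup (RAAG Γ)
  | false => vertexSubgroup Γ A
  | true => vertexSubgroup Γ B

theorem inter_le_splitFactor : ∀ b, vertexSubgroup Γ (A ∩ B) ≤ splitFactor Γ A B b
  | false => vertexSubgroup_mono Set.inter_subset_left
  | true => vertexSubgroup_mono Set.inter_subset_right

def splitEdge (b : Bool) : vertexSubgroup Γ (A ∩ B) →* splitFactor Γ A B b :=
  Subgroup.inclusion (inter_le_splitFactor Γ A B b)

variable {Γ A B}

theorem gen_mem_splitFactor_false {u : V} (hA : u ∈ A) : gen Γ u ∈ splitFactor Γ A B false :=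
  gen_mem_vertexSubgroup hA

theorem gen_mem_splitFactor_true {u : V} (hB : u ∈ B) : gen Γ u ∈ splitFactor Γ A B true :=
  gen_mem_vertexSubgroup hB

theorem of_false_eq_of_true {u : V} (hA : u ∈ A) (hB : u ∈ B) :
    of (φ := splitEdge Γ A B) false ⟨gen Γ u, gen_mem_splitFactor_false hA⟩ =
      of true ⟨gen Γ u, gen_mem_splitFactor_true hB⟩ :=
  (of_apply_eq_base (splitEdge Γ A B) false ⟨gen Γ u, gen_mem_vertexSubgroup ⟨hA, hB⟩⟩).trans
    (of_apply_eq_base (splitEdge Γ A B) true _).symm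

variable (Γ A B) in
open Classical in
noncomputable def splitGen (u : V) : PushoutI (splitEdge Γ A B) :=
  if hA : u ∈ A then of false ⟨gen Γ u, gen_mem_splitFactor_false hA⟩
  else if hB : u ∈ B then of true ⟨gen Γ u, gen_mem_splitFactor_true hB⟩ else 1

theorem splitGen_of_mem_left {u : V} (hA : u ∈ A) :
    splitGen Γ A B u = of false ⟨gen Γ u, gen_mem_splitFactor_false hA⟩ :=
  dif_pos hA

theorem splitGen_of_mem_right {u : V} (hB : u ∈ B) :
    splitGen Γ A B u = of true ⟨gen Γ u, gen_mem_splitFactor_true hB⟩ := by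
  by_cases hA : u ∈ A
  · rw [splitGen_of_mem_left hA, of_false_eq_of_true hA hB]
  · exact (dif_neg hA).trans (dif_pos hB)

theorem splitGen_of_notMem {u : V} (hA : u ∉ A) (hB : u ∉ B) : splitGen Γ A B u = 1 :=
  (dif_neg hA).trans (dif_neg hB)

theorem splitGen_commute (hAB : ∀ u ∈ A \ B, ∀ v ∈ B \ A, ¬ Γ.Adj u v) {u v : V}
    (huv : Γ.Adj u v) : Commute (splitGen Γ A B u) (splitGen Γ A B v) := by
  by_cases hA : u ∈ A ∧ v ∈ A
  · rw [splitGen_of_mem_left hA.1, splitGen_of_mem_left hA.2]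
    exact Commute.map (Subtype.ext (gen_commute huv).eq) _
  by_cases hB : u ∈ B ∧ v ∈ B
  · rw [splitGen_of_mem_right hB.1, splitGen_of_mem_right hB.2]
    exact Commute.map (Subtype.ext (gen_commute huv).eq) _
  by_cases hu : u ∈ A ∨ u ∈ B
  · by_cases hv : v ∈ A ∨ v ∈ B
    · exfalso
      by_cases huA : u ∈ A
      · exact hAB u ⟨huA, by tauto⟩ v ⟨by tauto, by tauto⟩ huv
      · exact hAB v ⟨by tauto, by tauto⟩ u ⟨by tauto, huA⟩ huv.symm
    · rw [splitGen_of_notMem (u := v) (by tauto) (by tauto)]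
      exact Commute.one_right _
  · rw [splitGen_of_notMem (u := u) (by tauto) (by tauto)]
    exact Commute.one_left _

noncomputable def toSplit (hAB : ∀ u ∈ A \ B, ∀ v ∈ B \ A, ¬ Γ.Adj u v) :
    RAAG Γ →* PushoutI (splitEdge Γ A B) :=
  lift (splitGen Γ A B) fun _ _ => splitGen_commute hAB

variable (Γ A B) in
noncomputable def fromSplit : PushoutI (splitEdge Γ A B) →* RAAG Γ :=
  PushoutI.lift (fun b => (splitFactor Γ A B b).subtype) (vertexSubgroup Γ (A ∩ B)).subtype
    fun _ => Subgroup.subtype_comp_inclusion _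

theorem fromSplit_of (b : Bool) (x : splitFactor Γ A B b) : fromSplit Γ A B (of b x) = x :=
  PushoutI.lift_of (φ := splitEdge Γ A B) (fun b => (splitFactor Γ A B b).subtype) _ _ x

theorem fromSplit_comp_toSplit (hAB : ∀ u ∈ A \ B, ∀ v ∈ B \ A, ¬ Γ.Adj u v) :
    (fromSplit Γ A B).comp (toSplit hAB) = retraction Γ (A ∪ B) := by
  refine hom_ext fun u => ?_
  simp only [MonoidHom.comp_apply, toSplit, lift_gen, retraction_gen]
  by_cases hA : u ∈ A
  · rw [splitGen_of_mem_left hA, fromSplit_of, if_pos (Set.mem_union_left _ hA)]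
  by_cases hB : u ∈ B
  · rw [splitGen_of_mem_right hB, fromSplit_of, if_pos (Set.mem_union_right _ hB)]
  · rw [splitGen_of_notMem hA hB, map_one, if_neg (by simp [hA, hB])]

theorem toSplit_of_mem_left (hAB : ∀ u ∈ A \ B, ∀ v ∈ B \ A, ¬ Γ.Adj u v) {x : RAAG Γ}
    (hx : x ∈ vertexSubgroup Γ A) : toSplit hAB x = of false ⟨x, hx⟩ := by
  induction hx using Subgroup.closure_induction with
  | mem _ hy =>
    obtain ⟨u, hu, rfl⟩ := hy
    exact (lift_gen _ _ u).trans (splitGen_of_mem_left hu)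
  | one => exact (map_one _).trans (map_one _).symm
  | mul _ _ _ _ ihx ihy => rw [map_mul, ihx, ihy, ← map_mul]; rfl
  | inv _ _ ih => rw [map_inv, ih, ← map_inv]; rfl

/-- Under `hAB`, `toSplit` identifies `⟨A ∪ B⟩` with the amalgam `⟨A⟩ *_{⟨A ∩ B⟩} ⟨B⟩`, so this
is `PushoutI.mem_range_of_commute` transported to `A(Γ)`. -/
theorem mem_vertexSubgroup_of_commute (hAB : ∀ u ∈ A \ B, ∀ v ∈ B \ A, ¬ Γ.Adj u v)
    {a : RAAG Γ} (ha : a ∈ vertexSubgroup Γ A)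
    (hconj : ∀ c ∈ vertexSubgroup Γ A, c * a * c⁻¹ ∉ vertexSubgroup Γ (A ∩ B))
    {x : RAAG Γ} (hx : x ∈ vertexSubgroup Γ (A ∪ B)) (hxa : Commute x a) :
    x ∈ vertexSubgroup Γ A := by
  have hconj' (c : splitFactor Γ A B false) :
      c * ⟨a, ha⟩ * c⁻¹ ∉ (splitEdge Γ A B false).range := by
    rintro ⟨h, hh⟩
    have e : (h : RAAG Γ) = c * a * c⁻¹ := congrArg Subtype.val hh
    exact hconj c c.2 (e ▸ h.2)
  obtain ⟨y, hy⟩ := mem_range_of_commute (φ := splitEdge Γ A B)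
    (fun b => Subgroup.inclusion_injective (inter_le_splitFactor Γ A B b)) hconj'
    (x := toSplit hAB x) (toSplit_of_mem_left hAB ha ▸ hxa.map _)
  rw [← retraction_eq_self hx, ← fromSplit_comp_toSplit hAB, MonoidHom.comp_apply, ← hy,
    fromSplit_of]
  exact y.2

end Splitting

theorem mem_vertexSubgroup_starOfVertex_of_commute_of_mem {v : V} {n : ℕ} (hn : n ≠ 0)
    {k : RAAG Γ} (hk : Commute k (gen Γ v ^ n)) (S : Finset V) (hvS : v ∈ S)
    (hkS : k ∈ vertexSubgroup Γ S) : k ∈ vertexSubgroup Γ (starOfVertex Γ v) := by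
  classical
  induction S using Finset.strongInduction with
  | H S ih =>
  by_cases hS : (S : Set V) ⊆ starOfVertex Γ v
  · exact vertexSubgroup_mono hS hkS
  obtain ⟨w, hwS, hw⟩ := Set.not_subset.1 hS
  have hvw : v ≠ w := fun h => hw (Or.inl h.symm)
  have hvstar : v ∉ starOfVertex Γ w := by
    rintro (h | h)
    exacts [hvw h, hw (Or.inr h.symm)]
  refine ih _ (Finset.erase_ssubset hwS) (Finset.mem_erase.2 ⟨hvw, hvS⟩) ?_
  rw [Finset.coe_erase]
  -- split `⟨S⟩` along the star of `w`: `v ^ n` lies in the factor `⟨S \ {w}⟩`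
  have hvA : gen Γ v ^ n ∈ vertexSubgroup Γ ((S : Set V) \ {w}) :=
    pow_mem (gen_mem_vertexSubgroup (show v ∈ (S : Set V) \ {w} from ⟨hvS, hvw⟩)) n
  refine mem_vertexSubgroup_of_commute (B := S ∩ starOfVertex Γ w) ?_ hvA ?_
    (vertexSubgroup_mono ?_ hkS) hk
  · rintro u ⟨⟨huS, -⟩, hu⟩ x ⟨⟨hxS, -⟩, hxA⟩ hux
    obtain rfl : x = w := by_contra fun h => hxA ⟨hxS, h⟩
    exact hu ⟨huS, Or.inr hux.symm⟩
  · intro c _ hc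
    have := vertexSubgroup_le_ker_exponentSum (fun h => hvstar h.2.2) hc
    simp [MonoidHom.mem_ker, exponentSum_gen_pow, hn] at this
  · intro u hu
    by_cases huw : u = w
    · exact Or.inr ⟨hu, Or.inl huw⟩
    · exact Or.inl ⟨hu, huw⟩

theorem mem_vertexSubgroup_starOfVertex_of_commute [Finite V] {v : V} {n : ℕ} (hn : n ≠ 0)
    {k : RAAG Γ} (hk : Commute k (gen Γ v ^ n)) : k ∈ vertexSubgroup Γ (starOfVertex Γ v) := by
  have := Fintype.ofFinite V
  refine mem_vertexSubgroup_starOfVertex_of_commute_of_mem hn hk Finset.univ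
    (Finset.mem_univ v) ?_
  rw [Finset.coe_univ, vertexSubgroup_univ]
  exact Subgroup.mem_top k

section Star

variable (Γ) (Λ : Set V)

theorem vertexSubgroup_starSet_le_normalizer :
    vertexSubgroup Γ (starSet Γ Λ) ≤ Subgroup.normalizer (vertexSubgroup Γ Λ : Set (RAAG Γ)) := by
  refine (Subgroup.closure_le _).2 ?_
  rintro _ ⟨s, hs | hs, rfl⟩
  · exact Subgroup.le_normalizer (gen_mem_vertexSubgroup hs)
  · refine Subgroup.centralizer_le_normalizer _ ?_
    rw [vertexSubgroup, Subgroup.centralizer_closure, Subgroup.mem_centralizer_iff]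
    rintro _ ⟨u, hu, rfl⟩
    exact (gen_commute (hs u hu)).eq.symm

theorem biInter_starOfVertex_subset_starSet : ⋂ v ∈ Λ, starOfVertex Γ v ⊆ starSet Γ Λ := by
  intro x hx
  by_cases hxΛ : x ∈ Λ
  · exact Or.inl hxΛ
  · refine Or.inr fun u hu => ?_
    rcases Set.mem_iInter₂.1 hx u hu with rfl | h
    exacts [absurd hu hxΛ, h.symm]

theorem commensurator_vertexSubgroup_le [Finite V] :
    Subgroup.Commensurable.commensurator (vertexSubgroup Γ Λ) ≤
      vertexSubgroup Γ (starSet Γ Λ) := by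
  intro g hg
  set r := retraction Γ Λ
  have hk (v : V) (hv : v ∈ Λ) : g * (r g)⁻¹ ∈ vertexSubgroup Γ (starOfVertex Γ v) := by
    obtain ⟨n, hn, hconj⟩ :=
      Subgroup.exists_pow_conj_mem_of_mem_commensurator hg (gen_mem_vertexSubgroup hv)
    -- `r` fixes `⟨Λ⟩`, so `r g` conjugates `v ^ n` to the same element as `g` does
    have hr := retraction_eq_self hconj
    rw [map_mul, map_mul, map_inv, map_pow, retraction_gen, if_pos hv] at hr
    refine mem_vertexSubgroup_starOfVertex_of_commute hn ?_
    calc g * (r g)⁻¹ * gen Γ v ^ n = g * ((r g)⁻¹ * gen Γ v ^ n * r g) * (r g)⁻¹ := by group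
      _ = gen Γ v ^ n * (g * (r g)⁻¹) := by rw [hr]; group
  have hkΛ : g * (r g)⁻¹ ∈ vertexSubgroup Γ (⋂ v ∈ Λ, starOfVertex Γ v) := by
    rw [vertexSubgroup_biInter Λ.toFinite]
    exact Subgroup.mem_iInf.2 fun v => Subgroup.mem_iInf.2 (hk v)
  have := mul_mem (vertexSubgroup_mono (biInter_starOfVertex_subset_starSet Γ Λ) hkΛ)
    (vertexSubgroup_mono Set.subset_union_left (retraction_mem Λ g))
  rwa [inv_mul_cancel_right] at this

end Star

end RAAG

/-- For an induced subgraph `Λ` of a finite simple graph `Γ`, the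
commensurator of `⟨Λ⟩` in `A(Γ)` equals its normaliser, and both equal `⟨star(Λ)⟩`. -/
theorem raag_commensurator_eq_normalizer_eq_star {V : Type} [Fintype V]
    (Γ : SimpleGraph V) (Λ : Set V) :
    Subgroup.Commensurable.commensurator (vertexSubgroup Γ Λ) =
      Subgroup.normalizer (vertexSubgroup Γ Λ : Set (RAAG Γ)) ∧
    Subgroup.normalizer (vertexSubgroup Γ Λ : Set (RAAG Γ)) = vertexSubgroup Γ (starSet Γ Λ) := by
  have h₁ := RAAG.vertexSubgroup_starSet_le_normalizer Γ Λ
  have h₂ := (vertexSubgroup Γ Λ).normalizer_le_commensurator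
  have h₃ := RAAG.commensurator_vertexSubgroup_le Γ Λ
  exact ⟨(h₃.trans h₁).antisymm h₂, (h₂.trans h₃).antisymm h₁⟩
end CoarseGraph
end

section
/- Let n ≥ 1 be an integer and Y a subset of ℤ^n contained in ℤ^{n−1} × {0}. If Y coarsely separates ℤ^n (with respect to a word metric on ℤ^n), then Y is quasi-dense in ℤ^{n−1} × {0}, i.e. there exists R ≥ 0 such that every point of ℤ^{n−1} × {0} is at distance at most R from Y. -/
/-!
A finite generating set of `ℤ^n` gives a word metric bi-Lipschitz equivalent to the ℓ¹ metric,
so a unit ℓ¹-step between points ℓ¹-far from `Y` is realised by a Cayley-graph path avoiding a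
given neighbourhood of `Y`. If `Y ⊆ ℤ^{n-1} × {0}` were not quasi-dense in the hyperplane, some
point `z` of the hyperplane would be arbitrarily far from `Y`. Since `Y` lies in the hyperplane,
the ℓ¹-distance to `Y` of a point is its height plus the distance of its projection, so any
point far from `Y` is joined to `z` outside the neighbourhood: move vertically away from the
hyperplane, travel parallel to it at a height exceeding the neighbourhood radius, and descend
the vertical line through `z`. Hence all deep points lie in a single component.
-/
section WordMetric

variable {G : Type*} [Group G] {S : Set G}

theorem wordDist_le_length {x y : G} {l : List G} (hl : ∀ s ∈ l, s ∈ S ∨ s⁻¹ ∈ S)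
    (hy : y = x * l.prod) : wordDist S x y ≤ l.length :=
  sInf_le ⟨l, hl, hy, rfl⟩

theorem exists_word_of_wordDist_le {x y : G} {k : ℕ} (h : wordDist S x y ≤ k) :
    ∃ l : List G, (∀ s ∈ l, s ∈ S ∨ s⁻¹ ∈ S) ∧ y = x * l.prod ∧ l.length ≤ k := by
  have hne : {n : ℕ∞ | ∃ l : List G, (∀ s ∈ l, s ∈ S ∨ s⁻¹ ∈ S) ∧ y = x * l.prod ∧
      n = l.length}.Nonempty := by
    by_contra hempty
    rw [Set.not_nonempty_iff_eq_empty] at hempty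
    simp [wordDist, hempty] at h
  obtain ⟨l, hl, hy, hlen⟩ := csInf_mem hne
  exact ⟨l, hl, hy, by rw [wordDist, hlen] at h; exact_mod_cast h⟩

theorem exists_mem_wordDist_le_of_setWordDist_le {A : Set G} {x : G} {k : ℕ}
    (h : setWordDist S A x ≤ k) : ∃ a ∈ A, wordDist S a x ≤ k := by
  by_contra! hfar
  have : (k : ℕ∞) + 1 ≤ setWordDist S A x :=
    le_iInf₂ fun a ha => Order.add_one_le_of_lt (hfar a ha)
  exact (this.trans h).not_gt ((ENat.lt_add_one_iff (ENat.natCast_ne_top k)).2 le_rfl)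

theorem exists_word_of_closure_eq_top (hS : Subgroup.closure S = ⊤) (g : G) :
    ∃ l : List G, (∀ s ∈ l, s ∈ S ∨ s⁻¹ ∈ S) ∧ l.prod = g := by
  have hg : g ∈ Submonoid.closure (S ∪ S⁻¹) := by
    rw [← Subgroup.closure_toSubmonoid, hS]; trivial
  simpa using Submonoid.exists_list_of_mem_closure hg

theorem exists_word_length_le_of_finite (hS : Subgroup.closure S = ⊤) {T : Set G}
    (hT : T.Finite) : ∃ C : ℕ, ∀ g ∈ T, ∃ l : List G, (∀ s ∈ l, s ∈ S ∨ s⁻¹ ∈ S) ∧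
      l.prod = g ∧ l.length ≤ C := by
  choose w hwS hwg using exists_word_of_closure_eq_top hS
  obtain ⟨C, hC⟩ := (hT.image fun g => (w g).length).bddAbove
  exact ⟨C, fun g hg => ⟨w g, hwS g, hwg g, hC ⟨g, hg, rfl⟩⟩⟩

theorem ConnectedInCayley.symm {K : Set G} {x y : G} (h : ConnectedInCayley S K x y) :
    ConnectedInCayley S K y x := by
  induction h with
  | refl => exact .refl
  | tail _ hstep ih =>
    obtain ⟨hb, hc, s, hs, rfl⟩ := hstep
    refine .head ⟨hc, hb, s⁻¹, ?_, by group⟩ ih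
    simpa [or_comm] using hs

theorem connectedInCayley_mul_prod {K : Set G} {l : List G} (hl : ∀ s ∈ l, s ∈ S ∨ s⁻¹ ∈ S)
    {x : G} (hK : ∀ j, x * (l.take j).prod ∈ K) : ConnectedInCayley S K x (x * l.prod) := by
  induction l generalizing x with
  | nil => simpa using .refl
  | cons s l ih =>
    have hstep : ConnectedInCayley S K x (x * s) :=
      .single ⟨by simpa using hK 0, by simpa using hK 1, s, hl s List.mem_cons_self, rfl⟩
    have hrest := ih (fun t ht => hl t (List.mem_cons_of_mem _ ht))
      (x := x * s) (fun j => by simpa [mul_assoc] using hK (j + 1))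
    rw [List.prod_cons, ← mul_assoc]
    exact hstep.trans hrest

end WordMetric

theorem mem_uIcc_iff_forall {ι : Type*} {α : ι → Type*} [∀ i, Lattice (α i)]
    {a b r : ∀ i, α i} : r ∈ Set.uIcc a b ↔ ∀ i, r i ∈ Set.uIcc (a i) (b i) := by
  rw [← Set.pi_univ_uIcc, Set.mem_univ_pi]

section L1Norm

variable {ι : Type*} [Fintype ι]

def l1Norm (v : ι → ℤ) : ℕ := ∑ i, (v i).natAbs

theorem l1Norm_eq_zero {v : ι → ℤ} : l1Norm v = 0 ↔ v = 0 := by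
  simp [l1Norm, Finset.sum_eq_zero_iff, funext_iff]

theorem l1Norm_neg (v : ι → ℤ) : l1Norm (-v) = l1Norm v := by
  simp [l1Norm]

theorem l1Norm_add_le (v w : ι → ℤ) : l1Norm (v + w) ≤ l1Norm v + l1Norm w := by
  simp only [l1Norm, ← Finset.sum_add_distrib]
  exact Finset.sum_le_sum fun i _ => Int.natAbs_add_le _ _

theorem l1Norm_sub_comm (v w : ι → ℤ) : l1Norm (v - w) = l1Norm (w - v) := by
  rw [← neg_sub, l1Norm_neg]

theorem l1Norm_sub_le (u v w : ι → ℤ) : l1Norm (u - w) ≤ l1Norm (u - v) + l1Norm (v - w) := by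
  simpa using l1Norm_add_le (u - v) (v - w)

theorem natAbs_le_l1Norm (v : ι → ℤ) (i : ι) : (v i).natAbs ≤ l1Norm v :=
  Finset.single_le_sum (f := fun j => (v j).natAbs) (fun _ _ => Nat.zero_le _)
    (Finset.mem_univ i)

theorem l1Norm_eq_natAbs_add_l1Norm_update [DecidableEq ι] (v : ι → ℤ) (i : ι) :
    l1Norm v = (v i).natAbs + l1Norm (Function.update v i 0) := by
  simp only [l1Norm, ← Finset.add_sum_erase _ _ (Finset.mem_univ i), Function.update_self,
    Int.natAbs_zero, zero_add]
  refine congrArg _ (Finset.sum_congr rfl fun j hj => ?_)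
  rw [Function.update_of_ne (Finset.ne_of_mem_erase hj)]

theorem l1Norm_sub_add_l1Norm_sub {a b c : ι → ℤ} (hc : c ∈ Set.uIcc a b) :
    l1Norm (c - a) + l1Norm (b - c) = l1Norm (b - a) := by
  simp only [l1Norm, ← Finset.sum_add_distrib]
  refine Finset.sum_congr rfl fun i _ => ?_
  have := Set.mem_uIcc.1 (mem_uIcc_iff_forall.1 hc i)
  simp only [Pi.sub_apply]
  omega

theorem exists_mem_uIcc_l1Norm_sub_eq_one {a b : ι → ℤ} (hab : a ≠ b) :
    ∃ c ∈ Set.uIcc a b, l1Norm (c - a) = 1 := by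
  classical
  obtain ⟨i, hi⟩ := Function.ne_iff.1 hab
  set t : ℤ := if a i < b i then a i + 1 else a i - 1 with ht
  refine ⟨Function.update a i t, mem_uIcc_iff_forall.2 fun j => ?_, ?_⟩
  · rcases eq_or_ne j i with rfl | hj
    · simp only [Function.update_self, Set.mem_uIcc, ht]
      split_ifs <;> omega
    · simp [hj]
  · rw [l1Norm_eq_natAbs_add_l1Norm_update _ i]
    have : Function.update (Function.update a i t - a) i 0 = 0 := by
      ext j
      rcases eq_or_ne j i with rfl | hj <;> simp [*]
    rw [this, Pi.sub_apply, Function.update_self, ht]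
    split_ifs <;> simp [l1Norm]

theorem induction_by_unit_steps_toward {P : (ι → ℤ) → Prop} (b : ι → ℤ) (hb : P b)
    (step : ∀ a c, c ∈ Set.uIcc a b → l1Norm (c - a) = 1 → P c → P a) (a : ι → ℤ) :
    P a := by
  induction hk : l1Norm (b - a) generalizing a with
  | zero => rwa [← sub_eq_zero.1 (l1Norm_eq_zero.1 hk)]
  | succ k ih =>
    obtain ⟨c, hc, hca⟩ := exists_mem_uIcc_l1Norm_sub_eq_one (a := a) (b := b)
      (by rintro rfl; simp [l1Norm] at hk)
    have := l1Norm_sub_add_l1Norm_sub hc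
    exact step a c hc hca (ih c (by omega))

theorem finite_setOf_l1Norm_le (k : ℕ) : {v : ι → ℤ | l1Norm v ≤ k}.Finite := by
  classical
  refine (Set.finite_Icc (fun _ => -(k : ℤ)) fun _ => k).subset fun v (hv : l1Norm v ≤ k) => ?_
  refine ⟨fun i => ?_, fun i => ?_⟩ <;>
  · have := natAbs_le_l1Norm v i
    simp only
    omega

end L1Norm

section FreeAb

open Multiplicative

variable {n : ℕ} {S Y : Set (FreeAb n)}

structure WordL1Comparable (S : Set (FreeAb n)) (C₁ C₂ : ℕ) : Prop where
  l1Norm_le : ∀ x y : FreeAb n, ∀ k : ℕ, wordDist S x y ≤ k →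
    l1Norm (toAdd y - toAdd x) ≤ C₁ * k
  wordDist_le : ∀ x y : FreeAb n, wordDist S x y ≤ ↑(C₂ * l1Norm (toAdd y - toAdd x))

theorem exists_l1Norm_le_mul_of_wordDist_le (hS : S.Finite) :
    ∃ C : ℕ, ∀ x y : FreeAb n, ∀ k : ℕ, wordDist S x y ≤ k →
      l1Norm (toAdd y - toAdd x) ≤ C * k := by
  obtain ⟨C, hC⟩ := (hS.image fun s => l1Norm (toAdd s)).bddAbove
  have hletter : ∀ s, s ∈ S ∨ s⁻¹ ∈ S → l1Norm (toAdd s) ≤ C := by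
    rintro s (hs | hs)
    · exact hC ⟨s, hs, rfl⟩
    · simpa [l1Norm_neg] using hC ⟨s⁻¹, hs, rfl⟩
  have hword : ∀ l : List (FreeAb n), (∀ s ∈ l, s ∈ S ∨ s⁻¹ ∈ S) →
      l1Norm (toAdd l.prod) ≤ C * l.length := by
    intro l hl
    induction l with
    | nil => simp [l1Norm]
    | cons s l ih =>
      have hs := hletter s (hl s List.mem_cons_self)
      have hl' := ih fun t ht => hl t (List.mem_cons_of_mem _ ht)
      have := l1Norm_add_le (toAdd s) (toAdd l.prod)
      rw [List.prod_cons, toAdd_mul, List.length_cons, Nat.mul_succ]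
      omega
  refine ⟨C, fun x y k h => ?_⟩
  obtain ⟨l, hl, rfl, hlen⟩ := exists_word_of_wordDist_le h
  calc l1Norm (toAdd (x * l.prod) - toAdd x) = l1Norm (toAdd l.prod) := by simp
    _ ≤ C * l.length := hword l hl
    _ ≤ C * k := Nat.mul_le_mul_left C hlen

theorem exists_wordDist_le_mul_l1Norm (hS : Subgroup.closure S = ⊤) :
    ∃ C : ℕ, ∀ x y : FreeAb n, wordDist S x y ≤ ↑(C * l1Norm (toAdd y - toAdd x)) := by
  obtain ⟨C, hC⟩ := exists_word_length_le_of_finite hS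
    ((finite_setOf_l1Norm_le 1).preimage toAdd.injective.injOn)
  refine ⟨C, fun x y => ?_⟩
  suffices ∀ a, ∃ l : List (FreeAb n), (∀ s ∈ l, s ∈ S ∨ s⁻¹ ∈ S) ∧ y = ofAdd a * l.prod ∧
      l.length ≤ C * l1Norm (toAdd y - a) by
    obtain ⟨l, hl, hy, hlen⟩ := this (toAdd x)
    exact (wordDist_le_length hl hy).trans (by exact_mod_cast hlen)
  refine induction_by_unit_steps_toward (toAdd y) ⟨[], by simp, by simp, by simp⟩ ?_
  rintro a c hc hca ⟨l, hl, hy, hlen⟩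
  obtain ⟨l', hl', hprod, hlen'⟩ := hC (ofAdd (c - a)) (by simp [hca])
  refine ⟨l' ++ l, fun s hs => (List.mem_append.1 hs).elim (hl' s) (hl s), ?_, ?_⟩
  · rw [List.prod_append, hprod, hy, ← mul_assoc, ← ofAdd_add, add_sub_cancel]
  · rw [List.length_append, ← l1Norm_sub_add_l1Norm_sub hc, hca, Nat.mul_add, Nat.mul_one]
    omega

theorem IsFinGenSet.exists_wordL1Comparable (hS : IsFinGenSet S) :
    ∃ C₁ C₂ : ℕ, WordL1Comparable S C₁ C₂ := by
  obtain ⟨C₁, hC₁⟩ := exists_l1Norm_le_mul_of_wordDist_le hS.1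
  obtain ⟨C₂, hC₂⟩ := exists_wordDist_le_mul_l1Norm hS.2
  exact ⟨C₁, C₂, hC₁, hC₂⟩

def L1FarFrom (Y : Set (FreeAb n)) (m : ℕ) (p : Fin n → ℤ) : Prop :=
  ∀ v ∈ Y, m < l1Norm (p - toAdd v)

namespace WordL1Comparable

variable {C₁ C₂ L : ℕ}

theorem l1FarFrom_of_lt_setWordDist (hC : WordL1Comparable S C₁ C₂) {m : ℕ} {p : FreeAb n}
    (h : ((C₂ * m : ℕ) : ℕ∞) < setWordDist S Y p) : L1FarFrom Y m (toAdd p) := by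
  intro v hv
  by_contra! hle
  have hdist : setWordDist S Y p ≤ ↑(C₂ * l1Norm (toAdd p - toAdd v)) :=
    (iInf₂_le v hv).trans (hC.wordDist_le v p)
  exact h.not_ge (hdist.trans (by exact_mod_cast Nat.mul_le_mul_left C₂ hle))

theorem notMem_wordNbhd (hC : WordL1Comparable S C₁ C₂) {r : FreeAb n}
    (h : L1FarFrom Y (C₁ * L) (toAdd r)) : r ∉ wordNbhd S Y L := fun hr => by
  obtain ⟨v, hv, hvr⟩ := exists_mem_wordDist_le_of_setWordDist_le hr
  exact (h v hv).not_ge (hC.l1Norm_le v r L hvr)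

theorem connectedInCayley_of_l1Norm_sub_le_one (hC : WordL1Comparable S C₁ C₂)
    {p q : Fin n → ℤ} (hpq : l1Norm (q - p) ≤ 1) (hp : L1FarFrom Y (C₁ * (L + C₂)) p) :
    ConnectedInCayley S (wordNbhd S Y L)ᶜ (ofAdd p) (ofAdd q) := by
  have hdist : wordDist S (ofAdd p) (ofAdd q) ≤ C₂ :=
    (hC.wordDist_le _ _).trans
      (by exact_mod_cast (Nat.mul_le_mul_left C₂ hpq).trans_eq (Nat.mul_one C₂))
  obtain ⟨l, hl, hq, hlen⟩ := exists_word_of_wordDist_le hdist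
  rw [hq]
  refine connectedInCayley_mul_prod hl fun j => hC.notMem_wordNbhd fun v hv => ?_
  set r := ofAdd p * (l.take j).prod
  have hprefix : wordDist S (ofAdd p) r ≤ C₂ :=
    (wordDist_le_length (fun s hs => hl s (List.mem_of_mem_take hs)) rfl).trans
      (by exact_mod_cast (List.length_take_le' j l).trans hlen)
  have hnear := hC.l1Norm_le _ _ _ hprefix
  have htri := l1Norm_sub_le p (toAdd r) (toAdd v)
  rw [toAdd_ofAdd] at hnear
  rw [l1Norm_sub_comm p (toAdd r)] at htri
  have hfar := hp v hv
  rw [Nat.mul_add] at hfar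
  omega

theorem connectedInCayley_of_forall_mem_uIcc (hC : WordL1Comparable S C₁ C₂)
    {a b : Fin n → ℤ} (h : ∀ p ∈ Set.uIcc a b, L1FarFrom Y (C₁ * (L + C₂)) p) :
    ConnectedInCayley S (wordNbhd S Y L)ᶜ (ofAdd a) (ofAdd b) := by
  refine induction_by_unit_steps_toward
    (P := fun a => (∀ p ∈ Set.uIcc a b, L1FarFrom Y (C₁ * (L + C₂)) p) →
      ConnectedInCayley S (wordNbhd S Y L)ᶜ (ofAdd a) (ofAdd b))
    b (fun _ => .refl) (fun a c hc hca ih h => ?_) a h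
  exact (hC.connectedInCayley_of_l1Norm_sub_le_one hca.le (h a Set.left_mem_uIcc)).trans
    (ih fun p hp => h p (Set.uIcc_subset_uIcc hc Set.right_mem_uIcc hp))

end WordL1Comparable

end FreeAb

section Hyperplane

open Multiplicative

variable {n : ℕ} {S Y : Set (FreeAb n)} {i : Fin n}

theorem l1Norm_sub_eq_of_apply_eq_zero {r v : Fin n → ℤ} (hv : v i = 0) :
    l1Norm (r - v) = (r i).natAbs + l1Norm (Function.update r i 0 - v) := by
  have hproj : Function.update (r - v) i 0 = Function.update r i 0 - v := by
    ext j
    rcases eq_or_ne j i with rfl | hj <;> simp [*]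
  rw [l1Norm_eq_natAbs_add_l1Norm_update (r - v) i, hproj, Pi.sub_apply, hv, sub_zero]

theorem Int.exists_lt_natAbs_mem_uIcc (m : ℕ) (a : ℤ) :
    ∃ h : ℤ, m < h.natAbs ∧ a ∈ Set.uIcc 0 h := by
  rcases le_total 0 a with ha | ha
  · exact ⟨a + m + 1, by omega, Set.mem_uIcc.2 (.inl ⟨ha, by omega⟩)⟩
  · exact ⟨a - m - 1, by omega, Set.mem_uIcc.2 (.inr ⟨by omega, ha⟩)⟩

theorem L1FarFrom.of_lt_natAbs (hY : ∀ v ∈ Y, toAdd v i = 0) {m : ℕ} {r : Fin n → ℤ}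
    (h : m < (r i).natAbs) : L1FarFrom Y m r := fun v hv => by
  rw [l1Norm_sub_eq_of_apply_eq_zero (hY v hv)]
  omega

/-- Moving a point away from the hyperplane `{v | v i = 0}` containing `Y` keeps it far
from `Y`. -/
theorem L1FarFrom.of_mem_uIcc_update (hY : ∀ v ∈ Y, toAdd v i = 0) {m : ℕ}
    {p r : Fin n → ℤ} {t : ℤ} (hp : L1FarFrom Y m p) (ht : p i ∈ Set.uIcc 0 t)
    (hr : r ∈ Set.uIcc p (Function.update p i t)) : L1FarFrom Y m r := fun v hv => by
  rw [mem_uIcc_iff_forall] at hr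
  have hproj : Function.update r i 0 = Function.update p i 0 := by
    ext j
    rcases eq_or_ne j i with rfl | hj
    · simp
    · simpa [hj] using hr j
  have hri : (p i).natAbs ≤ (r i).natAbs := by
    have := hr i
    simp only [Function.update_self, Set.mem_uIcc] at this ht
    omega
  have hpv := hp v hv
  rw [l1Norm_sub_eq_of_apply_eq_zero (hY v hv)] at hpv ⊢
  rw [hproj]
  omega

theorem WordL1Comparable.connectedInCayley_of_l1FarFrom {C₁ C₂ L : ℕ}
    (hC : WordL1Comparable S C₁ C₂) (hY : ∀ v ∈ Y, toAdd v i = 0) {p z : Fin n → ℤ}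
    (hp : L1FarFrom Y (C₁ * (L + C₂)) p) (hz : L1FarFrom Y (C₁ * (L + C₂)) z) (hzi : z i = 0) :
    ConnectedInCayley S (wordNbhd S Y L)ᶜ (ofAdd p) (ofAdd z) := by
  obtain ⟨h, hmh, hph⟩ := Int.exists_lt_natAbs_mem_uIcc (C₁ * (L + C₂)) (p i)
  have up : ConnectedInCayley S (wordNbhd S Y L)ᶜ (ofAdd p) (ofAdd (Function.update p i h)) :=
    hC.connectedInCayley_of_forall_mem_uIcc fun r hr => hp.of_mem_uIcc_update hY hph hr
  have across : ConnectedInCayley S (wordNbhd S Y L)ᶜ (ofAdd (Function.update p i h))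
      (ofAdd (Function.update z i h)) := by
    refine hC.connectedInCayley_of_forall_mem_uIcc fun r hr => L1FarFrom.of_lt_natAbs hY ?_
    have := mem_uIcc_iff_forall.1 hr i
    simp only [Function.update_self, Set.uIcc_self, Set.mem_singleton_iff] at this
    rwa [this]
  have down : ConnectedInCayley S (wordNbhd S Y L)ᶜ (ofAdd z) (ofAdd (Function.update z i h)) :=
    hC.connectedInCayley_of_forall_mem_uIcc fun r hr =>
      hz.of_mem_uIcc_update hY (hzi ▸ Set.left_mem_uIcc) hr
  exact up.trans (across.trans down.symm)

end Hyperplane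

/-- Let `n ≥ 1` and let `Y ⊆ ℤ^n` be contained in `ℤ^{n-1} × {0}`
(the last coordinate vanishes on `Y`). If `Y` coarsely separates `ℤ^n` (for a word
metric on `ℤ^n`), then `Y` is quasi-dense in `ℤ^{n-1} × {0}`: there is `R ≥ 0` such that
every point of `ℤ^{n-1} × {0}` is at distance at most `R` from `Y`. -/
theorem quasiDense_of_coarselySeparates_in_hyperplane {n : ℕ} (hn : 1 ≤ n)
    (Y : Set (FreeAb n))
    (hY : ∀ y ∈ Y, Multiplicative.toAdd y (⟨n - 1, by omega⟩ : Fin n) = 0)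
    (S : Set (FreeAb n)) (hS : IsFinGenSet S)
    (hsep : CoarselySeparates S Y) :
    ∃ R : ℕ, ∀ z : FreeAb n, Multiplicative.toAdd z (⟨n - 1, by omega⟩ : Fin n) = 0 →
      setWordDist S Y z ≤ (R : ℕ∞) := by
  obtain ⟨L, x, y, -, -, hxy, hx, hy⟩ := hsep
  obtain ⟨C₁, C₂, hC⟩ := hS.exists_wordL1Comparable
  by_contra! hfar
  obtain ⟨x', hxx', hx'⟩ := hx (C₂ * (C₁ * (L + C₂)))
  obtain ⟨y', hyy', hy'⟩ := hy (C₂ * (C₁ * (L + C₂)))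
  obtain ⟨z, hz0, hz⟩ := hfar (C₂ * (C₁ * (L + C₂)))
  have hx'z := hC.connectedInCayley_of_l1FarFrom hY (hC.l1FarFrom_of_lt_setWordDist hx')
    (hC.l1FarFrom_of_lt_setWordDist hz) hz0
  have hy'z := hC.connectedInCayley_of_l1FarFrom hY (hC.l1FarFrom_of_lt_setWordDist hy')
    (hC.l1FarFrom_of_lt_setWordDist hz) hz0
  exact hxy (hxx'.trans (hx'z.trans (hy'z.symm.trans hyy'.symm)))
end
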